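/- For every k > 0 there exist constants C = C(k) > 0 and δ = δ(k) > 0 such that for every pair X, Y ∈ ℝ^{n×2} with max{‖B(X)‖, ‖B(Y)‖} ≤ k one has −⟨(A(X) − A(Y))J, X − Y⟩ + C·‖B(X) − B(Y)‖·min{‖X‖, ‖Y‖}·‖X − Y‖ ≥ δ·‖X − Y‖². (Note −⟨(A(X)−A(Y))J, X−Y⟩ = ⟨D𝒜(X)−D𝒜(Y), X−Y⟩ since J² = −Id₂.) -/

import Mathlib

/-!
With `S = XᵀX`, the gradient of the area integrand factors as `D𝒜(X) = X G(X)`, where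
`G(X) = ((1 + ‖X‖²) I - S) / 𝒜(X)` (`areaCoeff`), and Cayley–Hamilton for `S` turns the
definition of `B` into `B(X) = -G(X) J`, so `‖B(X)‖ = ‖G(X)‖`. The matrix `G(X)` is symmetric
positive definite with determinant `1`, so its eigenvalues are `λ` and `1/λ` with
`λ ≤ ‖G(X)‖`; hence `G(X) ≥ I / k` when `‖B(X)‖ ≤ k`. Splitting
`D𝒜(X) - D𝒜(Y) = (X - Y) G(X) + Y (G(X) - G(Y))` gives
`⟨D𝒜(X) - D𝒜(Y), X - Y⟩ ≥ ‖X - Y‖² / k - ‖G(X) - G(Y)‖ ‖Y‖ ‖X - Y‖`, and exchanging `X` and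
`Y` gives the bound with `min{‖X‖, ‖Y‖}`, `C = 1` and `δ = 1/k`.
-/

open Matrix BigOperators

noncomputable section

/-- Frobenius inner product of matrices. -/
def frobInner {m k : ℕ} (X Y : Matrix (Fin m) (Fin k) ℝ) : ℝ :=
  ∑ i, ∑ j, X i j * Y i j

/-- Frobenius norm of a matrix. -/
def frobNorm {m k : ℕ} (X : Matrix (Fin m) (Fin k) ℝ) : ℝ :=
  Real.sqrt (frobInner X X)

/-- The area integrand `𝒜(X) = √(1 + ‖X‖² + det(XᵀX))`. -/
def Area {n : ℕ} (X : Matrix (Fin n) (Fin 2) ℝ) : ℝ :=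
  Real.sqrt (1 + frobInner X X + (Xᵀ * X).det)

/-- The symplectic matrix `J = [[0,1],[−1,0]]`. -/
def symJ : Matrix (Fin 2) (Fin 2) ℝ := !![0, 1; -1, 0]

/-- The gradient of a function on matrix space, given by entrywise partial derivatives. -/
def grad {n : ℕ} (f : Matrix (Fin n) (Fin 2) ℝ → ℝ) (X : Matrix (Fin n) (Fin 2) ℝ) :
    Matrix (Fin n) (Fin 2) ℝ :=
  fun i j => deriv (fun t : ℝ => f (X + t • Matrix.single i j 1)) 0

/-- `A(X) = D𝒜(X)J`. -/
def matA {n : ℕ} (X : Matrix (Fin n) (Fin 2) ℝ) : Matrix (Fin n) (Fin 2) ℝ :=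
  grad Area X * symJ

/-- `B(X) = XᵀD𝒜(X)J − 𝒜(X)J`. -/
def matB {n : ℕ} (X : Matrix (Fin n) (Fin 2) ℝ) : Matrix (Fin 2) (Fin 2) ℝ :=
  Xᵀ * grad Area X * symJ - Area X • symJ

section Frobenius

attribute [local instance] Matrix.frobeniusNormedAddCommGroup

variable {m p : ℕ}

lemma frobInner_self_nonneg (X : Matrix (Fin m) (Fin p) ℝ) : 0 ≤ frobInner X X :=
  Finset.sum_nonneg fun _ _ => Finset.sum_nonneg fun _ _ => mul_self_nonneg _

lemma frobNorm_sq (X : Matrix (Fin m) (Fin p) ℝ) : frobNorm X ^ 2 = frobInner X X :=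
  Real.sq_sqrt (frobInner_self_nonneg X)

lemma frobNorm_eq_norm (X : Matrix (Fin m) (Fin p) ℝ) : frobNorm X = ‖X‖ := by
  rw [frobNorm, frobenius_norm_def, Real.sqrt_eq_rpow, frobInner]
  simp_rw [Real.rpow_two, Real.norm_eq_abs, sq_abs, sq]

lemma frobNorm_nonneg (X : Matrix (Fin m) (Fin p) ℝ) : 0 ≤ frobNorm X :=
  Real.sqrt_nonneg _

lemma frobNorm_neg (X : Matrix (Fin m) (Fin p) ℝ) : frobNorm (-X) = frobNorm X := by
  rw [frobNorm_eq_norm, frobNorm_eq_norm, norm_neg]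

lemma frobNorm_sub_comm (X Y : Matrix (Fin m) (Fin p) ℝ) :
    frobNorm (X - Y) = frobNorm (Y - X) := by
  simp only [frobNorm_eq_norm, norm_sub_rev]

lemma frobNorm_mul_le {l : ℕ} (X : Matrix (Fin m) (Fin l) ℝ) (Y : Matrix (Fin l) (Fin p) ℝ) :
    frobNorm (X * Y) ≤ frobNorm X * frobNorm Y := by
  simpa only [frobNorm_eq_norm] using frobenius_norm_mul X Y

lemma frobInner_add_left (X Y Z : Matrix (Fin m) (Fin p) ℝ) :
    frobInner (X + Y) Z = frobInner X Z + frobInner Y Z := by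
  simp [frobInner, add_mul, Finset.sum_add_distrib]

lemma frobInner_smul_left (c : ℝ) (X Y : Matrix (Fin m) (Fin p) ℝ) :
    frobInner (c • X) Y = c * frobInner X Y := by
  simp [frobInner, Finset.mul_sum, mul_assoc]

lemma frobInner_neg_left (X Y : Matrix (Fin m) (Fin p) ℝ) :
    frobInner (-X) Y = -frobInner X Y := by
  simp [frobInner]

lemma frobInner_sub_sub_comm (X Y Z W : Matrix (Fin m) (Fin p) ℝ) :
    frobInner (X - Y) (Z - W) = frobInner (Y - X) (W - Z) := by
  simp only [frobInner, Matrix.sub_apply]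
  exact Finset.sum_congr rfl fun _ _ => Finset.sum_congr rfl fun _ _ => by ring

lemma frobInner_le_frobNorm_mul (X Y : Matrix (Fin m) (Fin p) ℝ) :
    frobInner X Y ≤ frobNorm X * frobNorm Y := by
  simpa only [frobInner, frobNorm, ← Fintype.sum_prod_type', sq] using
    Real.sum_mul_le_sqrt_mul_sqrt Finset.univ (fun q : Fin m × Fin p => X q.1 q.2)
      (fun q => Y q.1 q.2)

lemma neg_frobNorm_mul_le_frobInner (X Y : Matrix (Fin m) (Fin p) ℝ) :
    -(frobNorm X * frobNorm Y) ≤ frobInner X Y := by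
  have h := frobInner_le_frobNorm_mul (-X) Y
  rw [frobInner_neg_left, frobNorm_neg] at h
  linarith

lemma frobInner_single_one (X : Matrix (Fin m) (Fin p) ℝ) (i : Fin m) (j : Fin p) :
    frobInner X (single i j 1) = X i j := by
  simp [frobInner, single_apply, ite_and]

lemma frobNorm_mul_symJ (M : Matrix (Fin m) (Fin 2) ℝ) : frobNorm (M * symJ) = frobNorm M := by
  simp [frobNorm, frobInner, symJ, mul_apply, Fin.sum_univ_two, add_comm]

lemma symJ_mul_symJ : symJ * symJ = -1 := by
  ext a b
  fin_cases a <;> fin_cases b <;> simp [symJ, mul_apply]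

end Frobenius

lemma mul_self_eq_trace_smul_sub_det_smul {R : Type*} [CommRing R] (S : Matrix (Fin 2) (Fin 2) R) :
    S * S = S.trace • S - S.det • 1 := by
  ext a b
  fin_cases a <;> fin_cases b <;> simp [mul_apply, trace_fin_two, det_fin_two] <;> ring

section QuadraticForm

variable {𝕜 : Type*} [Field 𝕜] [LinearOrder 𝕜] [IsStrictOrderedRing 𝕜]

lemma quadForm_nonneg {a b c : 𝕜} (ha : 0 ≤ a) (hc : 0 ≤ c) (hb : b ^ 2 ≤ a * c)
    (x y : 𝕜) :
    0 ≤ a * x ^ 2 + 2 * b * x * y + c * y ^ 2 := by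
  rcases ha.eq_or_lt with rfl | ha
  · obtain rfl : b = 0 := by nlinarith
    nlinarith
  · have : 0 ≤ a * (a * x ^ 2 + 2 * b * x * y + c * y ^ 2) := by
      nlinarith [sq_nonneg (a * x + b * y), mul_nonneg (sub_nonneg.2 hb) (sq_nonneg y)]
    exact nonneg_of_mul_nonneg_right this ha

lemma inv_mul_sq_add_sq_le {p q r k : 𝕜} (hp : 0 < p) (hdet : p * r - q ^ 2 = 1)
    (hk : p ^ 2 + 2 * q ^ 2 + r ^ 2 ≤ k ^ 2) (hk₀ : 0 < k) (x y : 𝕜) :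
    k⁻¹ * (x ^ 2 + y ^ 2) ≤ p * x ^ 2 + 2 * q * x * y + r * y ^ 2 := by
  -- `!![p, q; q, r]` has eigenvalues `λ, 1/λ` with `λ² + λ⁻² ≤ k²`, so both are `≥ 1/k`:
  -- `!![p - k⁻¹, q; q, r - k⁻¹]` is positive semidefinite.
  have hr : 0 < r := by nlinarith
  have hp_le : p ≤ k := by nlinarith
  have hr_le : r ≤ k := by nlinarith
  have hkk : k * k⁻¹ = 1 := mul_inv_cancel₀ hk₀.ne'
  have ha : 0 ≤ p - k⁻¹ := by nlinarith [inv_pos.2 hk₀]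
  have hc : 0 ≤ r - k⁻¹ := by nlinarith [inv_pos.2 hk₀]
  have htrace : p + r ≤ k + k⁻¹ := by
    have : (p + r) ^ 2 ≤ (k + k⁻¹) ^ 2 := by nlinarith [sq_nonneg k⁻¹]
    nlinarith [inv_pos.2 hk₀]
  have hdisc : q ^ 2 ≤ (p - k⁻¹) * (r - k⁻¹) := by nlinarith [inv_pos.2 hk₀]
  linarith [quadForm_nonneg ha hc hdisc x y]

end QuadraticForm

lemma inv_mul_frobInner_le_frobInner_mul {m : ℕ} {M : Matrix (Fin 2) (Fin 2) ℝ} {k : ℝ}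
    (hsymm : M 1 0 = M 0 1) (hpos : 0 < M 0 0) (hdet : M.det = 1) (hM : frobNorm M ≤ k)
    (d : Matrix (Fin m) (Fin 2) ℝ) :
    k⁻¹ * frobInner d d ≤ frobInner (d * M) d := by
  have hnorm : frobNorm M ^ 2 = M 0 0 ^ 2 + 2 * M 0 1 ^ 2 + M 1 1 ^ 2 := by
    rw [frobNorm_sq, frobInner, Fin.sum_univ_two, Fin.sum_univ_two, Fin.sum_univ_two, hsymm]
    ring
  have hM₀ : 0 < frobNorm M :=
    (frobNorm_nonneg M).lt_of_ne fun h => by nlinarith [sq_nonneg (M 0 1), sq_nonneg (M 1 1)]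
  rw [det_fin_two, hsymm, ← sq] at hdet
  simp only [frobInner, Finset.mul_sum, mul_apply, Fin.sum_univ_two, hsymm]
  refine Finset.sum_le_sum fun i _ => ?_
  have := inv_mul_sq_add_sq_le hpos hdet (hnorm ▸ pow_le_pow_left₀ hM₀.le hM 2)
    (hM₀.trans_le hM) (d i 0) (d i 1)
  linarith

section Area

variable {n : ℕ} (X : Matrix (Fin n) (Fin 2) ℝ)

lemma det_transpose_mul_self_nonneg : 0 ≤ (Xᵀ * X).det := by
  simpa [conjTranspose_eq_transpose_of_trivial] using
    (posSemidef_conjTranspose_mul_self X).det_nonneg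

lemma frobInner_self_eq_trace : frobInner X X = (Xᵀ * X).trace := by
  simp [frobInner, trace_fin_two, mul_apply, Fin.sum_univ_two, Finset.sum_add_distrib]

lemma Area_sq :
    Area X ^ 2 = 1 + frobInner X X + (Xᵀ * X).det :=
  Real.sq_sqrt (by linarith [frobInner_self_nonneg X, det_transpose_mul_self_nonneg X])

lemma Area_pos : 0 < Area X :=
  Real.sqrt_pos.2 (by linarith [frobInner_self_nonneg X, det_transpose_mul_self_nonneg X])

lemma hasDerivAt_transpose_mul_self_apply (E : Matrix (Fin n) (Fin 2) ℝ) (a b : Fin 2) :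
    HasDerivAt (fun t : ℝ => ((X + t • E)ᵀ * (X + t • E)) a b)
      ((Eᵀ * X + Xᵀ * E) a b) 0 := by
  simp only [mul_apply, transpose_apply, Matrix.add_apply, Matrix.smul_apply, smul_eq_mul,
    ← Finset.sum_add_distrib]
  refine HasDerivAt.fun_sum fun m _ => ?_
  have line : ∀ c : Fin 2, HasDerivAt (fun t : ℝ => X m c + t * E m c) (E m c) 0 := fun c => by
    simpa using ((hasDerivAt_id (0 : ℝ)).mul_const (E m c)).const_add (X m c)
  simpa [add_comm, mul_comm] using (line a).fun_mul (line b)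

lemma transpose_mul_self_symm : (Xᵀ * X) 1 0 = (Xᵀ * X) 0 1 := by
  simp [mul_apply, mul_comm]

lemma hasDerivAt_Area_sq_line (E : Matrix (Fin n) (Fin 2) ℝ) :
    HasDerivAt (fun t : ℝ => Area (X + t • E) ^ 2)
      (2 * frobInner (X * ((1 + frobInner X X) • 1 - Xᵀ * X)) E) 0 := by
  have hS := hasDerivAt_transpose_mul_self_apply X E
  have h := (((hS 0 0).add (hS 1 1)).const_add 1).add
    (((hS 0 0).fun_mul (hS 1 1)).fun_sub ((hS 0 1).fun_mul (hS 1 0)))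
  refine (h.congr_deriv ?_).congr_of_eventuallyEq (.of_forall fun t => ?_)
  · have hsymm := transpose_mul_self_symm X
    rw [frobInner_self_eq_trace, trace_fin_two, zero_smul, add_zero]
    set S := Xᵀ * X
    simp only [hsymm, frobInner, mul_apply, Fin.sum_univ_two, transpose_apply, Matrix.add_apply,
      Matrix.sub_apply, Matrix.smul_apply, one_apply_eq, one_apply_ne one_ne_zero,
      one_apply_ne zero_ne_one, smul_eq_mul, mul_one, mul_zero, zero_sub]
    simp only [Finset.mul_sum, Finset.sum_mul, ← Finset.sum_add_distrib,
      ← Finset.sum_sub_distrib]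
    refine Finset.sum_congr rfl fun _ _ => ?_
    ring
  · simp only [Pi.add_apply, Area_sq, frobInner_self_eq_trace, trace_fin_two, det_fin_two]

def areaCoeff : Matrix (Fin 2) (Fin 2) ℝ :=
  (Area X)⁻¹ • ((1 + frobInner X X) • 1 - Xᵀ * X)

lemma hasDerivAt_Area_line (E : Matrix (Fin n) (Fin 2) ℝ) :
    HasDerivAt (fun t : ℝ => Area (X + t • E)) (frobInner (X * areaCoeff X) E) 0 := by
  have h := (hasDerivAt_Area_sq_line X E).sqrt (by simp [(Area_pos X).ne'])
  simp only [zero_smul, add_zero, Real.sqrt_sq (Area_pos X).le] at h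
  refine (h.congr_deriv ?_).congr_of_eventuallyEq (.of_forall fun t => ?_)
  · rw [areaCoeff, Matrix.mul_smul, frobInner_smul_left]
    field_simp [(Area_pos X).ne']
  · exact (Real.sqrt_sq (Area_pos _).le).symm

lemma grad_Area : grad Area X = X * areaCoeff X := by
  ext i j
  rw [grad, (hasDerivAt_Area_line X (single i j 1)).deriv, frobInner_single_one]

lemma matB_eq : matB X = -(areaCoeff X * symJ) := by
  have hA : Area X ≠ 0 := (Area_pos X).ne'
  have hcayley : Xᵀ * X * ((1 + frobInner X X) • 1 - Xᵀ * X) - Area X ^ 2 • 1 =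
      -((1 + frobInner X X) • 1 - Xᵀ * X) := by
    rw [Area_sq, Matrix.mul_sub, Matrix.mul_smul, Matrix.mul_one,
      mul_self_eq_trace_smul_sub_det_smul, ← frobInner_self_eq_trace]
    module
  have hsmul : Area X • symJ = (Area X)⁻¹ • (Area X ^ 2 • 1 * symJ) := by
    rw [Matrix.smul_mul, Matrix.one_mul, smul_smul]
    field_simp
  rw [matB, grad_Area, ← Matrix.mul_assoc, areaCoeff, Matrix.mul_smul, Matrix.smul_mul, hsmul,
    ← smul_sub, ← Matrix.sub_mul, hcayley, Matrix.neg_mul, smul_neg, Matrix.smul_mul]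

lemma areaCoeff_eq : areaCoeff X = (Area X)⁻¹ •
    !![1 + (Xᵀ * X) 1 1, -(Xᵀ * X) 0 1; -(Xᵀ * X) 0 1, 1 + (Xᵀ * X) 0 0] := by
  rw [areaCoeff, frobInner_self_eq_trace, trace_fin_two]
  congr 1
  ext a b
  fin_cases a <;> fin_cases b <;> simp [transpose_mul_self_symm] <;> ring

lemma areaCoeff_symm : areaCoeff X 1 0 = areaCoeff X 0 1 := by
  simp [areaCoeff_eq]

lemma areaCoeff_zero_zero_pos : 0 < areaCoeff X 0 0 := by
  have : 0 ≤ (Xᵀ * X) 1 1 := by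
    simp only [mul_apply, transpose_apply]
    exact Finset.sum_nonneg fun _ _ => mul_self_nonneg _
  simpa [areaCoeff_eq] using mul_pos (inv_pos.2 (Area_pos X)) (by linarith : 0 < 1 + (Xᵀ * X) 1 1)

lemma det_areaCoeff : (areaCoeff X).det = 1 := by
  have hA := Area_sq X
  rw [det_fin_two, frobInner_self_eq_trace, trace_fin_two, transpose_mul_self_symm] at hA
  rw [areaCoeff_eq, det_smul, det_fin_two_of, Fintype.card_fin, inv_pow]
  field_simp [(Area_pos X).ne']
  linear_combination -hA

lemma frobNorm_matB : frobNorm (matB X) = frobNorm (areaCoeff X) := by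
  rw [matB_eq, frobNorm_neg, frobNorm_mul_symJ]

lemma frobNorm_matB_sub (Y : Matrix (Fin n) (Fin 2) ℝ) :
    frobNorm (matB X - matB Y) = frobNorm (areaCoeff X - areaCoeff Y) := by
  rw [matB_eq, matB_eq, neg_sub_neg, ← Matrix.sub_mul, frobNorm_mul_symJ, frobNorm_sub_comm]

lemma inv_mul_frobNorm_sub_sq_le {k : ℝ} (Y : Matrix (Fin n) (Fin 2) ℝ)
    (hX : frobNorm (matB X) ≤ k) :
    k⁻¹ * frobNorm (X - Y) ^ 2 ≤ frobInner (grad Area X - grad Area Y) (X - Y) +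
      frobNorm (matB X - matB Y) * frobNorm Y * frobNorm (X - Y) := by
  have hsplit : grad Area X - grad Area Y =
      (X - Y) * areaCoeff X + Y * (areaCoeff X - areaCoeff Y) := by
    rw [grad_Area, grad_Area, Matrix.sub_mul, Matrix.mul_sub]
    abel
  have hcoercive : k⁻¹ * frobNorm (X - Y) ^ 2 ≤ frobInner ((X - Y) * areaCoeff X) (X - Y) := by
    rw [frobNorm_sq]
    exact inv_mul_frobInner_le_frobInner_mul (areaCoeff_symm X) (areaCoeff_zero_zero_pos X)
      (det_areaCoeff X) (frobNorm_matB X ▸ hX) _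
  have hcross : -(frobNorm (matB X - matB Y) * frobNorm Y * frobNorm (X - Y)) ≤
      frobInner (Y * (areaCoeff X - areaCoeff Y)) (X - Y) := by
    rw [frobNorm_matB_sub, mul_comm (frobNorm _) (frobNorm Y)]
    refine le_trans ?_ (neg_frobNorm_mul_le_frobInner _ _)
    gcongr
    · exact frobNorm_nonneg _
    · exact frobNorm_mul_le _ _
  rw [hsplit, frobInner_add_left]
  linarith

end Area

theorem main_subdeterminant_bound_general {n : ℕ} (k : ℝ) (hk : 0 < k) :
    ∃ C δ : ℝ, 0 < C ∧ 0 < δ ∧ ∀ X Y : Matrix (Fin n) (Fin 2) ℝ,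
      max (frobNorm (matB X)) (frobNorm (matB Y)) ≤ k →
      -frobInner ((matA X - matA Y) * symJ) (X - Y) +
          C * frobNorm (matB X - matB Y) * min (frobNorm X) (frobNorm Y) * frobNorm (X - Y) ≥
        δ * frobNorm (X - Y) ^ 2 := by
  refine ⟨1, k⁻¹, one_pos, inv_pos.2 hk, fun X Y hXY => ?_⟩
  have hAJ : -frobInner ((matA X - matA Y) * symJ) (X - Y) =
      frobInner (grad Area X - grad Area Y) (X - Y) := by
    rw [matA, matA, ← Matrix.sub_mul, Matrix.mul_assoc, symJ_mul_symJ, Matrix.mul_neg,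
      Matrix.mul_one, frobInner_neg_left, neg_neg]
  rw [hAJ, one_mul]
  rcases le_total (frobNorm X) (frobNorm Y) with h | h
  · have hYX := inv_mul_frobNorm_sub_sq_le Y X (le_of_max_le_right hXY)
    rw [frobInner_sub_sub_comm, frobNorm_sub_comm (matB Y), frobNorm_sub_comm Y X] at hYX
    rw [min_eq_left h]
    linarith
  · rw [min_eq_right h]
    linarith [inv_mul_frobNorm_sub_sq_le X Y (le_of_max_le_left hXY)]

/-- For every `k > 0` there exist `C = C(k) > 0` and `δ = δ(k) > 0` such that for every
`X, Y ∈ ℝ^{n×2}` with `max{‖B(X)‖, ‖B(Y)‖} ≤ k` one has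
`−⟨(A(X) − A(Y))J, X − Y⟩ + C·‖B(X) − B(Y)‖·min{‖X‖,‖Y‖}·‖X − Y‖ ≥ δ·‖X − Y‖²`. -/
theorem main_subdeterminant_bound {n : ℕ} (hn : 1 ≤ n) (k : ℝ) (hk : 0 < k) :
    ∃ C δ : ℝ, 0 < C ∧ 0 < δ ∧ ∀ X Y : Matrix (Fin n) (Fin 2) ℝ,
      max (frobNorm (matB X)) (frobNorm (matB Y)) ≤ k →
      -frobInner ((matA X - matA Y) * symJ) (X - Y) +
          C * frobNorm (matB X - matB Y) * min (frobNorm X) (frobNorm Y) * frobNorm (X - Y) ≥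
        δ * frobNorm (X - Y) ^ 2 :=
  main_subdeterminant_bound_general k hk

end
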